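/- Sensitivity under a local change, element inside the basis: Let M be a loopless matroid, x and x' weightings differing only at element e, and B an x-optimal basis with e ∈ B. Then B is x'-optimal if and only if x'(e) ≤ μ_e(x). -/

import Mathlib

open Matroid Set

variable {α : Type*}

/-- A circuit of a matroid: a minimal dependent set. -/
def Matroid.IsPaperCircuit (M : Matroid α) (C : Set α) : Prop :=
  M.Dep C ∧ ∀ ⦃D⦄, D ⊂ C → M.Indep D

/-- Looplessness in the sense of the paper: no element is a loop
(every singleton of the ground set is independent) and no element is a
coloop (no element lies in all bases). -/
def Matroid.PaperLoopless (M : Matroid α) : Prop :=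
  ∀ e ∈ M.E, M.Indep {e} ∧ ∃ B, M.IsBase B ∧ e ∉ B

/-- The weight `x(B)` of a set of ground elements. -/
noncomputable def setWeight (x : α → ℝ) (B : Set α) : ℝ := ∑ᶠ e ∈ B, x e

/-- The min-max weight `μ_e(x)`: the minimum over circuits `C` containing `e`
of the maximum weight of an element of `C - e`. -/
noncomputable def muWeight (M : Matroid α) (x : α → ℝ) (e : α) : ℝ :=
  sInf {w | ∃ C, M.IsPaperCircuit C ∧ e ∈ C ∧ w = sSup (x '' (C \ {e}))}

/-- The bottleneck weight `b_e(x) = min {x(e), μ_e(x)}`. -/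
noncomputable def bottleneck (M : Matroid α) (x : α → ℝ) (e : α) : ℝ :=
  min (x e) (muWeight M x e)

/-- The minimum weight of a basis of `M`. -/
noncomputable def mwb (M : Matroid α) (x : α → ℝ) : ℝ :=
  sInf {w | ∃ B, M.IsBase B ∧ w = setWeight x B}

/-- `B` is an `x`-optimal basis of `M`. -/
def IsOptimalBase (M : Matroid α) (x : α → ℝ) (B : Set α) : Prop :=
  M.IsBase B ∧ ∀ B', M.IsBase B' → setWeight x B ≤ setWeight x B'

/-- Deletion of a single element. -/
noncomputable def Matroid.del (M : Matroid α) (e : α) : Matroid α :=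
  M ↾ (M.E \ {e})

/-- Contraction of a single element, defined by duality: `M/e = (M✶ \ e)✶`. -/
noncomputable def Matroid.con (M : Matroid α) (e : α) : Matroid α :=
  ((M✶ ↾ (M.E \ {e}))✶)

/-!
Exchanging `e ∈ B` for some `f` of a circuit `C ∋ e` outside `B` yields a basis, and so does
exchanging the element of largest weight of the fundamental circuit of `e` in a basis `B' ∌ e`
for `e`. If `B` stays optimal after the change then the first exchange gives
`x' e ≤ max_{C - e} x` for every such circuit, i.e. `x' e ≤ μ_e(x)`. Conversely, if
`x' e ≤ μ_e(x)`, the second exchange compares `B` with every basis avoiding `e`, while bases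
containing `e` have their weight shifted by the same amount as `B`.
-/

lemma Set.Finite.le_csSup_image_iff {ι β : Type*} [ConditionallyCompleteLinearOrder β]
    {s : Set ι} (hs : s.Finite) (hne : s.Nonempty) {f : ι → β} {w : β} :
    w ≤ sSup (f '' s) ↔ ∃ i ∈ s, w ≤ f i := by
  refine ⟨fun h ↦ ?_, fun ⟨i, hi, hwi⟩ ↦ ?_⟩
  · obtain ⟨i, hi, hfi⟩ := (hne.image f).csSup_mem (hs.image f)
    exact ⟨i, hi, hfi ▸ h⟩
  · exact hwi.trans (le_csSup (hs.image f).bddAbove ⟨i, hi, rfl⟩)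

section setWeight

variable {x x' : α → ℝ} {s : Set α} {a b e : α}

lemma setWeight_eq_add_sdiff (x : α → ℝ) (hs : s.Finite) (ha : a ∈ s) :
    setWeight x s = x a + setWeight x (s \ {a}) := by
  conv_lhs => rw [← insert_eq_of_mem ha, ← insert_sdiff_singleton]
  exact finsum_mem_insert x (fun h ↦ h.2 rfl) hs.sdiff

lemma setWeight_insert_sdiff (x : α → ℝ) (hs : s.Finite) (ha : a ∉ s) (hb : b ∈ s) :
    setWeight x (insert a s \ {b}) = setWeight x s + x a - x b := by
  have hab : a ≠ b := ne_of_mem_of_not_mem hb ha |>.symm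
  rw [setWeight, ← insert_sdiff_singleton_comm hab,
    finsum_mem_insert _ (fun h ↦ ha h.1) hs.sdiff, setWeight_eq_add_sdiff x hs hb, setWeight]
  ring

lemma setWeight_eq_of_notMem (hdiff : ∀ f, f ≠ e → x' f = x f) (he : e ∉ s) :
    setWeight x' s = setWeight x s :=
  finsum_mem_congr rfl fun f hf ↦ hdiff f (ne_of_mem_of_not_mem hf he)

lemma setWeight_eq_add_of_mem (hdiff : ∀ f, f ≠ e → x' f = x f) (hs : s.Finite)
    (he : e ∈ s) :
    setWeight x' s = setWeight x s + (x' e - x e) := by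
  rw [setWeight_eq_add_sdiff x' hs he, setWeight_eq_add_sdiff x hs he,
    setWeight_eq_of_notMem hdiff (fun h ↦ h.2 rfl)]
  ring

end setWeight

namespace Matroid

variable {M : Matroid α} {x : α → ℝ} {B C : Set α} {e f : α}

lemma isPaperCircuit_iff : M.IsPaperCircuit C ↔ M.IsCircuit C :=
  isCircuit_iff_forall_ssubset.symm

lemma IsBase.exists_isBase_insert_sdiff_of_mem_isCircuit (hB : M.IsBase B) (heB : e ∈ B)
    (hC : M.IsCircuit C) (heC : e ∈ C) :
    ∃ f ∈ C \ {e}, f ∉ B ∧ M.IsBase (insert f B \ {e}) := by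
  have hC_not_sub : ¬ C \ {e} ⊆ M.closure (B \ {e}) := fun h ↦
    hB.indep.notMem_closure_sdiff_of_mem heB
      (M.closure_subset_closure_of_subset_closure h (hC.mem_closure_sdiff_singleton_of_mem heC))
  obtain ⟨f, hf, hfcl⟩ := not_subset.1 hC_not_sub
  have hfB : f ∉ B := fun hfB ↦
    hfcl (M.subset_closure _ (sdiff_subset.trans hB.subset_ground) ⟨hfB, hf.2⟩)
  refine ⟨f, hf, hfB, ?_⟩
  rw [← insert_sdiff_singleton_comm hf.2]
  exact hB.exchange_base_of_notMem_closure heB hfcl (hC.subset_ground hf.1)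

lemma IsBase.isBase_insert_sdiff_of_mem_fundCircuit (hB : M.IsBase B) (he : e ∈ M.E)
    (heB : e ∉ B) (hf : f ∈ M.fundCircuit e B \ {e}) :
    f ∈ B ∧ M.IsBase (insert e B \ {f}) := by
  have hfB : f ∈ B := (fundCircuit_sdiff_eq_inter M heB ▸ hf).2
  refine ⟨hfB, hB.exchange_isBase_of_indep' hfB heB ?_⟩
  exact (hB.indep.mem_fundCircuit_iff (by rwa [hB.closure_eq]) heB).1 hf.1

lemma IsCircuit.sdiff_singleton_nonempty (hC : M.IsCircuit C) (he : M.IsNonloop e) :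
    (C \ {e}).Nonempty := by
  by_contra hempty
  rw [not_nonempty_iff_eq_empty, sdiff_eq_empty] at hempty
  exact hC.not_indep (he.indep.subset hempty)

lemma le_muWeight_iff [M.Finite] (hnl : M.IsNonloop e) (hnc : ¬ M.IsColoop e) {w : ℝ} :
    w ≤ muWeight M x e ↔ ∀ C, M.IsCircuit C → e ∈ C → ∃ f ∈ C \ {e}, w ≤ x f := by
  have hfin :
      {w | ∃ C, M.IsPaperCircuit C ∧ e ∈ C ∧ w = sSup (x '' (C \ {e}))}.Finite := by
    refine (M.ground_finite.finite_subsets.image fun C ↦ sSup (x '' (C \ {e}))).subset ?_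
    rintro w ⟨C, hC, -, rfl⟩
    exact ⟨C, hC.1.subset_ground, rfl⟩
  obtain ⟨C₀, hC₀, heC₀⟩ : ∃ C, M.IsCircuit C ∧ e ∈ C := by
    simpa [isColoop_iff_forall_notMem_isCircuit hnl.mem_ground] using hnc
  rw [muWeight, le_csInf_iff hfin.bddBelow ⟨_, C₀, isPaperCircuit_iff.2 hC₀, heC₀, rfl⟩]
  have hsup :
      ∀ C, M.IsCircuit C → (w ≤ sSup (x '' (C \ {e})) ↔ ∃ f ∈ C \ {e}, w ≤ x f) :=
    fun C hC ↦ (M.set_finite _ (sdiff_subset.trans hC.subset_ground)).le_csSup_image_iff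
      (hC.sdiff_singleton_nonempty hnl)
  simp only [mem_ofPred_eq, forall_exists_index, and_imp, isPaperCircuit_iff]
  exact ⟨fun h C hC heC ↦ (hsup C hC).1 (h _ C hC heC rfl),
    fun h _ C hC heC hw ↦ hw ▸ (hsup C hC).2 (h C hC heC)⟩

end Matroid

namespace IsOptimalBase

variable {M : Matroid α} {x x' : α → ℝ} {B : Set α} {a b e : α}

lemma le_of_isBase_insert_sdiff [M.Finite] (hB : IsOptimalBase M x B) (hb : b ∈ B)
    (ha : a ∉ B) (hexch : M.IsBase (insert a B \ {b})) : x b ≤ x a := by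
  have hle := hB.2 _ hexch
  rw [setWeight_insert_sdiff x (M.set_finite B hB.1.subset_ground) ha hb] at hle
  linarith

lemma of_forall_isCircuit_exists_le [M.Finite] (hB : IsOptimalBase M x B) (heB : e ∈ B)
    (hdiff : ∀ f, f ≠ e → x' f = x f)
    (h : ∀ C, M.IsCircuit C → e ∈ C → ∃ f ∈ C \ {e}, x' e ≤ x f) :
    IsOptimalBase M x' B := by
  refine ⟨hB.1, fun B' hB' ↦ ?_⟩
  have hB'fin := M.set_finite B' hB'.subset_ground
  rw [setWeight_eq_add_of_mem hdiff (M.set_finite B hB.1.subset_ground) heB]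
  by_cases heB' : e ∈ B'
  · rw [setWeight_eq_add_of_mem hdiff hB'fin heB']
    linarith [hB.2 B' hB']
  have he : e ∈ M.E := hB.1.subset_ground heB
  obtain ⟨f, hf, hef⟩ := h _ (hB'.fundCircuit_isCircuit he heB') (M.mem_fundCircuit e B')
  obtain ⟨hfB', hexch⟩ := hB'.isBase_insert_sdiff_of_mem_fundCircuit he heB' hf
  have hle := hB.2 _ hexch
  rw [setWeight_insert_sdiff x hB'fin heB' hfB'] at hle
  rw [setWeight_eq_of_notMem hdiff heB']
  linarith

end IsOptimalBase

/-- local sensitivity for an element inside the optimal basis. -/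
theorem stmt15 (M : Matroid α) [M.Finite] (hM : M.PaperLoopless)
    (x x' : α → ℝ) {e : α} (he : e ∈ M.E)
    (hdiff : ∀ f, f ≠ e → x' f = x f)
    {B : Set α} (hB : IsOptimalBase M x B) (heB : e ∈ B) :
    IsOptimalBase M x' B ↔ x' e ≤ muWeight M x e := by
  obtain ⟨-, B₀, hB₀, heB₀⟩ := hM e he
  have hnc : ¬ M.IsColoop e := fun h ↦ heB₀ (hB₀.mem_of_isColoop h)
  rw [le_muWeight_iff (hB.1.indep.isNonloop_of_mem heB) hnc]
  refine ⟨fun hopt C hC heC ↦ ?_, hB.of_forall_isCircuit_exists_le heB hdiff⟩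
  obtain ⟨f, hf, hfB, hexch⟩ := hB.1.exists_isBase_insert_sdiff_of_mem_isCircuit heB hC heC
  exact ⟨f, hf, hdiff f hf.2 ▸ hopt.le_of_isBase_insert_sdiff heB hfB hexch⟩
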